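/- A multiveblen configuration M(X, p, 𝒫, H) where |X| = n and H is a (binomial(n,2)_{n-2}, binomial(n,3)_3)-configuration is a (binomial(n+2,2)_n, binomial(n+2,3)_3)-configuration: it has binomial(n+2,2) points, binomial(n+2,3) lines, each point on n lines and each line with 3 points, with any two points on at most one line. -/

import Mathlib

/-! Multiveblen configurations `M(X, p, 𝒫, H)`. -/

/-- 2-subsets of `X`. -/
abbrev P2 (X : Type*) [DecidableEq X] := {z : Finset X // z.card = 2}

/-- The point set of a multiveblen configuration: the center `p`, the points
`a_i`, `b_i` (`i ∈ X`), and the points `c_z` (`z ∈ ℘_2(X)`). -/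
abbrev MVPoint (X : Type*) [DecidableEq X] := Unit ⊕ ((Bool × X) ⊕ P2 X)

variable {X : Type*} [Fintype X] [DecidableEq X]

/-- The center `p`. -/
def ppt : MVPoint X := Sum.inl ()
/-- The point `a_i`. -/
def apt (i : X) : MVPoint X := Sum.inr (Sum.inl (false, i))
/-- The point `b_i`. -/
def bpt (i : X) : MVPoint X := Sum.inr (Sum.inl (true, i))
/-- The point `c_z`. -/
def cpt (z : P2 X) : MVPoint X := Sum.inr (Sum.inr z)
/-- The 2-subset `{i, j}`. -/
def pr (i j : X) (h : i ≠ j) : P2 X := ⟨{i, j}, Finset.card_pair h⟩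

/-- The lines of the multiveblen configuration `M(X, p, 𝒫, H)`:
`{a_i, b_j, c_{ij}}` and `{a_j, b_i, c_{ij}}` for `{i,j} ∉ 𝒫`;
`{a_i, a_j, c_{ij}}` and `{b_i, b_j, c_{ij}}` for `{i,j} ∈ 𝒫`;
`{p, a_i, b_i}` for `i ∈ X`; and `{c_u, c_v, c_w}` for each line
`{u, v, w}` of `H`. -/
def MVlines (P : Set (P2 X)) (H : Set (Finset (P2 X))) :
    Set (Finset (MVPoint X)) :=
  {L | ∃ i j, ∃ h : i ≠ j, pr i j h ∉ P ∧ L = {apt i, bpt j, cpt (pr i j h)}} ∪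
  {L | ∃ i j, ∃ h : i ≠ j, pr i j h ∈ P ∧ L = {apt i, apt j, cpt (pr i j h)}} ∪
  {L | ∃ i j, ∃ h : i ≠ j, pr i j h ∈ P ∧ L = {bpt i, bpt j, cpt (pr i j h)}} ∪
  {L | ∃ i, L = {ppt, apt i, bpt i}} ∪
  {L | ∃ h ∈ H, L = h.image cpt}

/-!
Apart from the lines of `H` and the lines `{p, a_i, b_i}`, every line joins a point over `i`
to a point over `j ≠ i` and passes through `c_{ij}`, the two points lying on the same side
(`a` or `b`) exactly when `{i, j} ∈ 𝒫`. So the lines through `a_i` (or `b_i`) are indexed by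
`j ∈ X`, and any second point of such a line recovers `j`: this gives degree `n` and linearity
at these points. Through `c_{ij}` pass two such lines and the `n - 2` lines of `H` through
`{i, j}`, and two `c`-points lie together only on lines of `H`. The number of lines then
follows by double counting incident pairs: `3 b = n · C(n+2, 2) = 3 · C(n+2, 3)`.
-/

theorem ncard_mul_eq_card_mul_of_uniform {α : Type*} [Fintype α] (S : Set (Finset α)) {k r : ℕ}
    (hk : ∀ L ∈ S, L.card = k) (hr : ∀ x : α, {L ∈ S | x ∈ L}.ncard = r) :
    S.ncard * k = Fintype.card α * r := by
  classical
  rw [Set.ncard_eq_toFinset_card', ← Finset.card_univ]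
  refine Finset.card_mul_eq_card_mul (fun L x => x ∈ L) (fun L hL => ?_) (fun x _ => ?_)
  · simpa [Finset.bipartiteAbove] using hk L (by simpa using hL)
  · rw [← hr x, Set.ncard_eq_toFinset_card']
    congr 1; ext L; simp [Finset.bipartiteBelow]

section Lines

omit [Fintype X]

variable {P : Set (P2 X)} {H : Set (Finset (P2 X))}

lemma pr_eq_pr_iff {i j k l : X} {h : i ≠ j} {h' : k ≠ l} :
    pr i j h = pr k l h' ↔ (i = k ∧ j = l) ∨ (i = l ∧ j = k) := by
  simp only [pr, Subtype.mk.injEq, Finset.ext_iff, Finset.mem_insert, Finset.mem_singleton]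
  constructor
  · intro e
    have := e i; have := e j; have := e k
    grind
  · grind

lemma pr_comm {i j : X} (h : i ≠ j) : pr i j h = pr j i h.symm :=
  pr_eq_pr_iff.2 (Or.inr ⟨rfl, rfl⟩)

def abpt (s : Bool) (i : X) : MVPoint X := Sum.inr (Sum.inl (s, i))

@[simp] lemma apt_eq_abpt (i : X) : apt i = abpt false i := rfl
@[simp] lemma bpt_eq_abpt (i : X) : bpt i = abpt true i := rfl

@[simp] lemma abpt_inj {s t : Bool} {i j : X} : abpt s i = abpt t j ↔ s = t ∧ i = j := by
  simp [abpt]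

@[simp] lemma cpt_inj {z w : P2 X} : cpt z = cpt w ↔ z = w := by simp [cpt]

@[simp] lemma ppt_ne_abpt (s : Bool) (i : X) : ppt ≠ abpt s i := by simp [ppt, abpt]
@[simp] lemma ppt_ne_cpt (z : P2 X) : ppt ≠ cpt z := by simp [ppt, cpt]
@[simp] lemma abpt_ne_cpt (s : Bool) (i : X) (z : P2 X) : abpt s i ≠ cpt z := by simp [abpt, cpt]
@[simp] lemma abpt_ne_ppt (s : Bool) (i : X) : abpt s i ≠ ppt := (ppt_ne_abpt s i).symm
@[simp] lemma cpt_ne_ppt (z : P2 X) : cpt z ≠ ppt := (ppt_ne_cpt z).symm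
@[simp] lemma cpt_ne_abpt (s : Bool) (i : X) (z : P2 X) : cpt z ≠ abpt s i :=
  (abpt_ne_cpt s i z).symm

lemma eq_ppt_or_abpt_or_cpt (x : MVPoint X) :
    x = ppt ∨ (∃ s i, x = abpt s i) ∨ ∃ z, x = cpt z := by
  rcases x with ⟨⟩ | ⟨⟨s, i⟩ | z⟩
  exacts [Or.inl rfl, Or.inr (Or.inl ⟨s, i, rfl⟩), Or.inr (Or.inr ⟨z, rfl⟩)]

/- Every line `{x_i, y_j, c_{ij}}` with `x, y ∈ {a, b}` is `crossLine P s i j h`, where `s` is the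
side of `x_i` (`false` for `a`) and `partnerSide` gives the side of `y_j`. -/
open Classical in
noncomputable def partnerSide (P : Set (P2 X)) (z : P2 X) (s : Bool) : Bool :=
  if z ∈ P then s else !s

@[simp] lemma partnerSide_partnerSide (z : P2 X) (s : Bool) :
    partnerSide P z (partnerSide P z s) = s := by
  unfold partnerSide; split_ifs <;> simp

def pLine (i : X) : Finset (MVPoint X) := {ppt, apt i, bpt i}

lemma pLine_injective : Function.Injective (pLine (X := X)) := by
  intro i j e
  have : apt i ∈ pLine j := e ▸ by simp [pLine]
  simpa [pLine] using this

noncomputable def crossLine (P : Set (P2 X)) (s : Bool) (i j : X) (h : i ≠ j) :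
    Finset (MVPoint X) :=
  {abpt s i, abpt (partnerSide P (pr i j h) s) j, cpt (pr i j h)}

lemma crossLine_comm (s : Bool) {i j : X} (h : i ≠ j) :
    crossLine P s i j h = crossLine P (partnerSide P (pr i j h) s) j i h.symm := by
  rw [crossLine, crossLine, ← pr_comm, partnerSide_partnerSide, Finset.insert_comm]

lemma mem_MVlines_iff {L : Finset (MVPoint X)} :
    L ∈ MVlines P H ↔ (∃ i, L = pLine i) ∨ (∃ s i j, ∃ h : i ≠ j, L = crossLine P s i j h) ∨
      ∃ h ∈ H, L = h.image cpt := by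
  simp only [MVlines, Set.mem_union, Set.mem_ofPred_eq]
  constructor
  · rintro ((((⟨i, j, h, hP, rfl⟩ | ⟨i, j, h, hP, rfl⟩) | ⟨i, j, h, hP, rfl⟩) | ⟨i, rfl⟩) |
      ⟨h, hH, rfl⟩)
    · exact Or.inr (Or.inl ⟨false, i, j, h, by simp [crossLine, partnerSide, hP]⟩)
    · exact Or.inr (Or.inl ⟨false, i, j, h, by simp [crossLine, partnerSide, hP]⟩)
    · exact Or.inr (Or.inl ⟨true, i, j, h, by simp [crossLine, partnerSide, hP]⟩)
    · exact Or.inl ⟨i, rfl⟩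
    · exact Or.inr (Or.inr ⟨h, hH, rfl⟩)
  · rintro (⟨i, rfl⟩ | ⟨s, i, j, h, rfl⟩ | ⟨h, hH, rfl⟩)
    · exact Or.inl (Or.inr ⟨i, rfl⟩)
    · by_cases hP : pr i j h ∈ P <;> cases s
      · exact Or.inl (Or.inl (Or.inl (Or.inr ⟨i, j, h, hP, by simp [crossLine, partnerSide, hP]⟩)))
      · exact Or.inl (Or.inl (Or.inr ⟨i, j, h, hP, by simp [crossLine, partnerSide, hP]⟩))
      · exact Or.inl (Or.inl (Or.inl (Or.inl
          ⟨i, j, h, hP, by simp [crossLine, partnerSide, hP]⟩)))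
      · have hP' : pr j i h.symm ∉ P := pr_comm h ▸ hP
        refine Or.inl (Or.inl (Or.inl (Or.inl ⟨j, i, h.symm, hP', ?_⟩)))
        rw [crossLine, partnerSide, if_neg hP, pr_comm h, Finset.insert_comm]
        rfl
    · exact Or.inr ⟨h, hH, rfl⟩

noncomputable def abLine (P : Set (P2 X)) (s : Bool) (i j : X) : Finset (MVPoint X) :=
  if h : i = j then pLine i else crossLine P s i j h

lemma abLine_mem_MVlines (s : Bool) (i j : X) : abLine P s i j ∈ MVlines P H := by
  unfold abLine
  split_ifs with h
  exacts [mem_MVlines_iff.2 (Or.inl ⟨i, rfl⟩),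
    mem_MVlines_iff.2 (Or.inr (Or.inl ⟨s, i, j, h, rfl⟩))]

lemma abpt_mem_abLine (s : Bool) (i j : X) : abpt s i ∈ abLine P s i j := by
  unfold abLine
  split_ifs
  · cases s <;> simp [pLine]
  · simp [crossLine]

lemma eq_pLine_of_ppt_mem {L : Finset (MVPoint X)} (hL : L ∈ MVlines P H) (hp : ppt ∈ L) :
    ∃ i, L = pLine i := by
  rcases mem_MVlines_iff.1 hL with ⟨i, rfl⟩ | ⟨s, i, j, h, rfl⟩ | ⟨g, -, rfl⟩
  · exact ⟨i, rfl⟩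
  · simp [crossLine] at hp
  · simp at hp

lemma eq_abLine_of_abpt_mem {L : Finset (MVPoint X)} (hL : L ∈ MVlines P H) {s : Bool} {i : X}
    (hx : abpt s i ∈ L) : ∃ j, L = abLine P s i j := by
  rcases mem_MVlines_iff.1 hL with ⟨k, rfl⟩ | ⟨t, k, l, h, rfl⟩ | ⟨g, -, rfl⟩
  · obtain rfl : i = k := by simp [pLine] at hx; tauto
    exact ⟨i, by simp [abLine]⟩
  · simp only [crossLine, Finset.mem_insert, Finset.mem_singleton, abpt_inj, abpt_ne_cpt,
      or_false] at hx
    rcases hx with ⟨rfl, rfl⟩ | ⟨rfl, rfl⟩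
    · exact ⟨l, by simp [abLine, h]⟩
    · exact ⟨k, by simp [abLine, h.symm, crossLine_comm t h]⟩
  · simp at hx

lemma eq_of_mem_abLine {s : Bool} {i j j' : X} {y : MVPoint X} (hy : y ≠ abpt s i)
    (hj : y ∈ abLine P s i j) (hj' : y ∈ abLine P s i j') : j = j' := by
  unfold abLine at hj hj'
  split_ifs at hj hj' with h h' h'
  · exact h.symm.trans h'
  all_goals simp [pLine, crossLine] at hj hj'
  all_goals rcases hj' with rfl | rfl | rfl <;> simp_all [pr_eq_pr_iff] <;> grind

lemma exists_mem_abLine_ne (s : Bool) (i j : X) : ∃ y ∈ abLine P s i j, y ≠ abpt s i := by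
  unfold abLine
  split_ifs with h
  · exact ⟨ppt, by simp [pLine], by simp⟩
  · exact ⟨cpt (pr i j h), by simp [crossLine], by simp⟩

lemma abLine_injective (s : Bool) (i : X) : Function.Injective (abLine P s i) := by
  intro j j' e
  obtain ⟨y, hy, hne⟩ := exists_mem_abLine_ne (P := P) s i j
  exact eq_of_mem_abLine hne hy (e ▸ hy)

lemma crossLine_injective {i j : X} (h : i ≠ j) : Function.Injective (crossLine P · i j h) := by
  intro t t' (e : crossLine P t i j h = crossLine P t' i j h)
  have : abpt t i ∈ crossLine P t' i j h := e ▸ by simp [crossLine]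
  simpa [crossLine, h] using this

lemma MVlines_through_cpt_eq {i j : X} (h : i ≠ j) :
    {L ∈ MVlines P H | cpt (pr i j h) ∈ L} =
      Set.range (crossLine P · i j h) ∪ Finset.image cpt '' {g ∈ H | pr i j h ∈ g} := by
  ext L
  constructor
  · rintro ⟨hL, hz⟩
    rcases mem_MVlines_iff.1 hL with ⟨k, rfl⟩ | ⟨t, k, l, h', rfl⟩ | ⟨g, hg, rfl⟩
    · simp [pLine] at hz
    · simp only [crossLine, Finset.mem_insert, Finset.mem_singleton, cpt_ne_abpt, cpt_inj,
        pr_eq_pr_iff, false_or] at hz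
      rcases hz with ⟨rfl, rfl⟩ | ⟨rfl, rfl⟩
      · exact Or.inl ⟨t, rfl⟩
      · exact Or.inl ⟨_, (crossLine_comm t h').symm⟩
    · exact Or.inr ⟨g, ⟨hg, by simpa using hz⟩, rfl⟩
  · rintro (⟨t, rfl⟩ | ⟨g, ⟨hg, hz⟩, rfl⟩)
    · exact ⟨mem_MVlines_iff.2 (Or.inr (Or.inl ⟨t, i, j, h, rfl⟩)), by simp [crossLine]⟩
    · exact ⟨mem_MVlines_iff.2 (Or.inr (Or.inr ⟨g, hg, rfl⟩)), by simpa using hz⟩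

lemma MVlines_through_abpt_eq (s : Bool) (i : X) :
    {L ∈ MVlines P H | abpt s i ∈ L} = Set.range (abLine P s i) := by
  ext L
  constructor
  · rintro ⟨hL, hx⟩
    obtain ⟨j, rfl⟩ := eq_abLine_of_abpt_mem hL hx
    exact ⟨j, rfl⟩
  · rintro ⟨j, rfl⟩
    exact ⟨abLine_mem_MVlines s i j, abpt_mem_abLine s i j⟩

lemma MVlines_through_ppt_eq : {L ∈ MVlines P H | ppt ∈ L} = Set.range (pLine (X := X)) := by
  ext L
  constructor
  · rintro ⟨hL, hp⟩
    obtain ⟨i, rfl⟩ := eq_pLine_of_ppt_mem hL hp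
    exact ⟨i, rfl⟩
  · rintro ⟨i, rfl⟩
    exact ⟨mem_MVlines_iff.2 (Or.inl ⟨i, rfl⟩), by simp [pLine]⟩

lemma eq_of_abpt_mem {L₁ L₂ : Finset (MVPoint X)} (hL₁ : L₁ ∈ MVlines P H)
    (hL₂ : L₂ ∈ MVlines P H) {s : Bool} {i : X} {y : MVPoint X} (hx₁ : abpt s i ∈ L₁)
    (hx₂ : abpt s i ∈ L₂) (hy : y ≠ abpt s i) (hy₁ : y ∈ L₁) (hy₂ : y ∈ L₂) : L₁ = L₂ := by
  obtain ⟨j, rfl⟩ := eq_abLine_of_abpt_mem hL₁ hx₁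
  obtain ⟨j', rfl⟩ := eq_abLine_of_abpt_mem hL₂ hx₂
  rw [eq_of_mem_abLine hy hy₁ hy₂]

lemma exists_eq_image_of_cpt_mem {L : Finset (MVPoint X)} (hL : L ∈ MVlines P H) {z w : P2 X}
    (hzw : z ≠ w) (hz : cpt z ∈ L) (hw : cpt w ∈ L) :
    ∃ g ∈ H, z ∈ g ∧ w ∈ g ∧ L = g.image cpt := by
  rcases mem_MVlines_iff.1 hL with ⟨k, rfl⟩ | ⟨t, k, l, h, rfl⟩ | ⟨g, hg, rfl⟩
  · simp [pLine] at hz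
  · simp [crossLine] at hz hw
    exact (hzw (hz.trans hw.symm)).elim
  · exact ⟨g, hg, by simpa using hz, by simpa using hw, rfl⟩

lemma not_ppt_cpt_mem {L : Finset (MVPoint X)} (hL : L ∈ MVlines P H) (hp : ppt ∈ L)
    (z : P2 X) : cpt z ∉ L := by
  obtain ⟨i, rfl⟩ := eq_pLine_of_ppt_mem hL hp
  simp [pLine]

theorem MVlines_linear
    (hHsts : ∀ h₁ ∈ H, ∀ h₂ ∈ H, ∀ z w : P2 X,
      z ≠ w → z ∈ h₁ → w ∈ h₁ → z ∈ h₂ → w ∈ h₂ → h₁ = h₂) :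
    ∀ L₁ ∈ MVlines P H, ∀ L₂ ∈ MVlines P H, ∀ x y : MVPoint X,
      x ≠ y → x ∈ L₁ → y ∈ L₁ → x ∈ L₂ → y ∈ L₂ → L₁ = L₂ := by
  intro L₁ hL₁ L₂ hL₂ x y hxy hx₁ hy₁ hx₂ hy₂
  rcases eq_ppt_or_abpt_or_cpt x with rfl | ⟨s, i, rfl⟩ | ⟨z, rfl⟩
  · rcases eq_ppt_or_abpt_or_cpt y with rfl | ⟨t, k, rfl⟩ | ⟨w, rfl⟩
    · exact absurd rfl hxy
    · exact eq_of_abpt_mem hL₁ hL₂ hy₁ hy₂ hxy hx₁ hx₂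
    · exact absurd hy₁ (not_ppt_cpt_mem hL₁ hx₁ w)
  · exact eq_of_abpt_mem hL₁ hL₂ hx₁ hx₂ hxy.symm hy₁ hy₂
  · rcases eq_ppt_or_abpt_or_cpt y with rfl | ⟨t, k, rfl⟩ | ⟨w, rfl⟩
    · exact absurd hx₁ (not_ppt_cpt_mem hL₁ hy₁ z)
    · exact eq_of_abpt_mem hL₁ hL₂ hy₁ hy₂ hxy hx₁ hx₂
    · have hzw : z ≠ w := fun e => hxy (congrArg cpt e)
      obtain ⟨g₁, hg₁, hz₁, hw₁, rfl⟩ := exists_eq_image_of_cpt_mem hL₁ hzw hx₁ hy₁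
      obtain ⟨g₂, hg₂, hz₂, hw₂, rfl⟩ := exists_eq_image_of_cpt_mem hL₂ hzw hx₂ hy₂
      rw [hHsts g₁ hg₁ g₂ hg₂ z w hzw hz₁ hw₁ hz₂ hw₂]

theorem card_eq_three_of_mem_MVlines (hH3 : ∀ h ∈ H, h.card = 3) :
    ∀ L ∈ MVlines P H, L.card = 3 := by
  intro L hL
  rcases mem_MVlines_iff.1 hL with ⟨k, rfl⟩ | ⟨t, k, l, h, rfl⟩ | ⟨g, hg, rfl⟩
  · exact Finset.card_eq_three.2 ⟨_, _, _, by simp, by simp, by simp, rfl⟩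
  · exact Finset.card_eq_three.2 ⟨_, _, _, by simp [h], by simp, by simp, rfl⟩
  · rw [Finset.card_image_of_injective _ fun _ _ => cpt_inj.1, hH3 g hg]

end Lines

section Counting

variable {P : Set (P2 X)} {H : Set (Finset (P2 X))}

lemma ncard_MVlines_through_cpt (hHr : ∀ z : P2 X, {g ∈ H | z ∈ g}.ncard = Fintype.card X - 2)
    (z : P2 X) : {L ∈ MVlines P H | cpt z ∈ L}.ncard = Fintype.card X := by
  obtain ⟨i, j, h, hz⟩ := Finset.card_eq_two.1 z.2
  obtain rfl : z = pr i j h := Subtype.ext hz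
  have two_le : 2 ≤ Fintype.card X := (pr i j h).2 ▸ Finset.card_le_univ _
  have hdisj : Disjoint (Set.range (crossLine P · i j h))
      (Finset.image cpt '' {g ∈ H | pr i j h ∈ g}) := by
    rw [Set.disjoint_left]
    rintro _ ⟨t, rfl⟩ ⟨g, -, hg⟩
    have : abpt t i ∈ g.image cpt := hg ▸ by simp [crossLine]
    simp at this
  rw [MVlines_through_cpt_eq h, Set.ncard_union_eq hdisj,
    Set.ncard_range_of_injective (crossLine_injective h),
    Set.ncard_image_of_injective _ (Finset.image_injective fun _ _ => cpt_inj.1), hHr,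
    Nat.card_eq_fintype_card, Fintype.card_bool]
  omega

theorem ncard_MVlines_through (hHr : ∀ z : P2 X, {g ∈ H | z ∈ g}.ncard = Fintype.card X - 2)
    (x : MVPoint X) : {L ∈ MVlines P H | x ∈ L}.ncard = Fintype.card X := by
  rcases eq_ppt_or_abpt_or_cpt x with rfl | ⟨s, i, rfl⟩ | ⟨z, rfl⟩
  · rw [MVlines_through_ppt_eq, Set.ncard_range_of_injective pLine_injective,
      Nat.card_eq_fintype_card]
  · rw [MVlines_through_abpt_eq, Set.ncard_range_of_injective (abLine_injective s i),
      Nat.card_eq_fintype_card]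
  · exact ncard_MVlines_through_cpt hHr z

theorem natCard_MVPoint : Nat.card (MVPoint X) = (Fintype.card X + 2).choose 2 := by
  simp only [Nat.card_eq_fintype_card, Fintype.card_sum, Fintype.card_unit, Fintype.card_prod,
    Fintype.card_bool, Fintype.card_finset_len, Nat.choose_succ_succ, Nat.choose_one_right,
    Nat.choose_zero_right]
  ring

theorem ncard_MVlines (hH3 : ∀ h ∈ H, h.card = 3)
    (hHr : ∀ z : P2 X, {g ∈ H | z ∈ g}.ncard = Fintype.card X - 2) :
    (MVlines P H).ncard = (Fintype.card X + 2).choose 3 := by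
  have hcount := ncard_mul_eq_card_mul_of_uniform (MVlines P H)
    (card_eq_three_of_mem_MVlines hH3) (ncard_MVlines_through hHr)
  rw [← Nat.card_eq_fintype_card, natCard_MVPoint] at hcount
  have hchoose :
      (Fintype.card X + 2).choose 3 * 3 = (Fintype.card X + 2).choose 2 * Fintype.card X := by
    simpa using Nat.choose_succ_right_eq (Fintype.card X + 2) 2
  omega

end Counting

theorem stmt_18_general (n : ℕ) (hn : Fintype.card X = n)
    (P : Set (P2 X)) (H : Set (Finset (P2 X)))
    (hH3 : ∀ h ∈ H, h.card = 3)
    (hHr : ∀ z : P2 X, {h ∈ H | z ∈ h}.ncard = n - 2)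
    (hHsts : ∀ h₁ ∈ H, ∀ h₂ ∈ H, ∀ z w : P2 X,
      z ≠ w → z ∈ h₁ → w ∈ h₁ → z ∈ h₂ → w ∈ h₂ → h₁ = h₂) :
    Nat.card (MVPoint X) = (n + 2).choose 2 ∧
    (MVlines P H).ncard = (n + 2).choose 3 ∧
    (∀ p : MVPoint X, {L ∈ MVlines P H | p ∈ L}.ncard = n) ∧
    (∀ L ∈ MVlines P H, L.card = 3) ∧
    (∀ L₁ ∈ MVlines P H, ∀ L₂ ∈ MVlines P H, ∀ p q : MVPoint X,
      p ≠ q → p ∈ L₁ → q ∈ L₁ → p ∈ L₂ → q ∈ L₂ → L₁ = L₂) := by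
  subst hn
  exact ⟨natCard_MVPoint, ncard_MVlines hH3 hHr, ncard_MVlines_through hHr,
    card_eq_three_of_mem_MVlines hH3, MVlines_linear hHsts⟩

/-- A multiveblen configuration `M(X, p, 𝒫, H)` with `|X| = n` and `H` a
`((n choose 2)_{n-2}, (n choose 3)_3)`-configuration is a
`(((n+2) choose 2)_n, ((n+2) choose 3)_3)`-configuration. -/
theorem stmt_18 (n : ℕ) (hn : Fintype.card X = n)
    (P : Set (P2 X)) (H : Set (Finset (P2 X)))
    (hH3 : ∀ h ∈ H, h.card = 3)
    (hHr : ∀ z : P2 X, {h ∈ H | z ∈ h}.ncard = n - 2)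
    (hHb : H.ncard = n.choose 3)
    (hHsts : ∀ h₁ ∈ H, ∀ h₂ ∈ H, ∀ z w : P2 X,
      z ≠ w → z ∈ h₁ → w ∈ h₁ → z ∈ h₂ → w ∈ h₂ → h₁ = h₂) :
    Nat.card (MVPoint X) = (n + 2).choose 2 ∧
    (MVlines P H).ncard = (n + 2).choose 3 ∧
    (∀ p : MVPoint X, {L ∈ MVlines P H | p ∈ L}.ncard = n) ∧
    (∀ L ∈ MVlines P H, L.card = 3) ∧
    (∀ L₁ ∈ MVlines P H, ∀ L₂ ∈ MVlines P H, ∀ p q : MVPoint X,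
      p ≠ q → p ∈ L₁ → q ∈ L₁ → p ∈ L₂ → q ∈ L₂ → L₁ = L₂) :=
  stmt_18_general n hn P H hH3 hHr hHsts
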